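/- arXiv:2402.15976 — 2 statements merged into one kernel-verified Lean document; each statement's English description precedes it below -/
import Mathlib

section
/- Let f : ℝⁿ → ℂ be in L² with support in B_R and ‖f‖_{L²} ≤ M. Define I₁(s) = ∫_{Sⁿ⁻¹} ∫₀¹ sⁿ t^{n-1} |∫_{ℝⁿ} f(x) e^{-i s t ξ̂·x} dx|² dt dσ(ξ̂) for complex s. Then I₁ extends to an entire function of s ∈ ℂ, and for all s = s₁ + i s₂ it satisfies |I₁(s)| ≤ C |s|ⁿ e^{2R|s₂|} M², where C > 0 depends only on n and R. -/
open MeasureTheory Real Filter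
open scoped InnerProductSpace

noncomputable section

/-- The analytic extension `I₁(s)` of `∫_{|ξ|≤s} |f̂(ξ)|² dξ`, written in polar
coordinates with the substitution `k = s t`:
`I₁(s) = ∫_{Sⁿ⁻¹} ∫₀¹ sⁿ t^{n-1} (∫ f(x) e^{-i s t ξ̂·x} dx)(∫ conj f(x) e^{i s t ξ̂·x} dx) dt dσ(ξ̂)`,
where `σ` is the surface ((n-1)-dimensional Hausdorff) measure on the unit sphere. -/
def I1 {n : ℕ} (f : EuclideanSpace ℝ (Fin n) → ℂ) (s : ℂ) : ℂ :=
  ∫ ω in Metric.sphere (0 : EuclideanSpace ℝ (Fin n)) 1,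
    (∫ t in Set.Ioo (0 : ℝ) 1,
      s ^ n * (t : ℂ) ^ (n - 1) *
        (∫ x, f x * Complex.exp (-Complex.I * s * (t : ℂ) * ((⟪ω, x⟫_ℝ : ℝ) : ℂ))) *
        (∫ x, (starRingEnd ℂ) (f x) *
          Complex.exp (Complex.I * s * (t : ℂ) * ((⟪ω, x⟫_ℝ : ℝ) : ℂ))))
    ∂ μH[(n : ℝ) - 1]

/-!
For fixed `ω` and `t` the two inner integrals of `I1` are values of the Laplace transform
`z ↦ ∫ g(x) e^{z⟪ω, x⟫} dx` of `g = f` and `g = conj f` at `z = ∓ i s t`. As `g` is integrable and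
vanishes outside `B_R`, this transform is entire in `z` and bounded by `‖g‖₁ e^{R |Re z|}`, which
gives the pointwise bound `|s|ⁿ ‖f‖₁² e^{2R |Im s|}` for the integrand of `I1`. Holomorphy survives
the `t`- and `ω`-integrations because an integral of entire functions dominated on every disc by
one integrable function is entire: Cauchy's estimate dominates the derivatives as well. Finally
the surface measure of the sphere is finite, as the sphere is covered by the radial projections
of the `2n` faces of the cube `[-1, 1]ⁿ`, each a Lipschitz image of an `(n - 1)`-dimensional
cube; and `‖f‖₁² ≤ |B_R| M²` by Cauchy–Schwarz.
-/

open Metric Topology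
open scoped ENNReal NNReal

theorem differentiable_integral_of_locally_dominated {α E : Type*} [MeasurableSpace α]
    {μ : Measure α} [NormedAddCommGroup E] [NormedSpace ℂ E] {F : ℂ → α → E}
    (hF_meas : ∀ z, AEStronglyMeasurable (F z) μ)
    (hF_diff : ∀ᵐ a ∂μ, Differentiable ℂ (F · a))
    (hF_bound : ∀ r, ∃ bound : α → ℝ, Integrable bound μ ∧
      ∀ᵐ a ∂μ, ∀ z, ‖z‖ ≤ r → ‖F z a‖ ≤ bound a) :
    Differentiable ℂ fun z => ∫ a, F z a ∂μ := by
  intro z₀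
  obtain ⟨bound, hbound_int, hbound⟩ := hF_bound (‖z₀‖ + 2)
  have hderiv_meas : AEStronglyMeasurable (fun a => deriv (F · a) z₀) μ :=
    aestronglyMeasurable_of_tendsto_ae (𝓝[≠] z₀) (f := fun z a => slope (F · a) z₀ z)
      (fun z => by
        simp only [slope_def_module]
        exact ((hF_meas z).sub (hF_meas z₀)).const_smul (z - z₀)⁻¹)
      (hF_diff.mono fun a ha => hasDerivAt_iff_tendsto_slope.mp (ha z₀).hasDerivAt)
  -- Cauchy's estimate on circles of radius one turns the bound on `F` into one on its derivative.
  have hderiv_bound : ∀ᵐ a ∂μ, ∀ z ∈ ball z₀ 1, ‖deriv (F · a) z‖ ≤ bound a := by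
    filter_upwards [hF_diff, hbound] with a hdiff hle z hz
    have := Complex.norm_deriv_le_of_forall_mem_sphere_norm_le one_pos hdiff.diffContOnCl
      fun w hw => hle w (by
        rw [mem_sphere_iff_norm] at hw
        rw [mem_ball_iff_norm] at hz
        linarith [norm_le_insert' w z, norm_le_insert' z z₀])
    simpa using this
  exact (hasDerivAt_integral_of_dominated_loc_of_deriv_le (ball_mem_nhds z₀ one_pos)
    (.of_forall hF_meas)
    (hbound_int.mono' (hF_meas z₀) (hbound.mono fun a ha => ha z₀ (by linarith [norm_nonneg z₀])))
    hderiv_meas hderiv_bound hbound_int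
    (hF_diff.mono fun a ha z _ => (ha z).hasDerivAt)).2.differentiableAt

theorem lipschitzOnWith_normalize {F : Type*} [NormedAddCommGroup F] [NormedSpace ℝ F] :
    LipschitzOnWith 2 (NormedSpace.normalize : F → F) {x | 1 ≤ ‖x‖} := by
  refine LipschitzOnWith.of_dist_le_mul fun x hx y hy => ?_
  have hx₀ : 0 < ‖x‖ := one_pos.trans_le hx
  have hy₀ : 0 < ‖y‖ := one_pos.trans_le hy
  have hsplit : NormedSpace.normalize x - NormedSpace.normalize y =
      ‖x‖⁻¹ • (x - y) + (‖x‖⁻¹ - ‖y‖⁻¹) • y := by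
    simp only [NormedSpace.normalize, smul_sub, sub_smul]; abel
  have hfirst : ‖‖x‖⁻¹ • (x - y)‖ ≤ ‖x - y‖ := by
    rw [norm_smul, norm_inv, norm_norm]
    exact mul_le_of_le_one_left (norm_nonneg _) (inv_le_one_of_one_le₀ hx)
  have hsecond : ‖(‖x‖⁻¹ - ‖y‖⁻¹) • y‖ ≤ ‖x - y‖ := by
    have : (‖x‖⁻¹ - ‖y‖⁻¹) * ‖y‖ = (‖y‖ - ‖x‖) / ‖x‖ := by field_simp
    rw [norm_smul, Real.norm_eq_abs, ← abs_of_pos hy₀, ← abs_mul, abs_of_pos hy₀, this,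
      abs_div, abs_of_pos hx₀, div_le_iff₀ hx₀]
    calc |‖y‖ - ‖x‖| ≤ ‖x - y‖ := by rw [abs_sub_comm]; exact abs_norm_sub_norm_le x y
      _ ≤ ‖x - y‖ * ‖x‖ := le_mul_of_one_le_right (norm_nonneg _) hx
  rw [dist_eq_norm, dist_eq_norm, hsplit, NNReal.coe_two, two_mul]
  exact (norm_add_le _ _).trans (add_le_add hfirst hsecond)

theorem lipschitzWith_insertNth {m : ℕ} {X : Type*} [PseudoMetricSpace X] (i : Fin (m + 1))
    (a : X) : LipschitzWith 1 (Fin.insertNth (α := fun _ => X) i a) := by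
  refine LipschitzWith.of_dist_le_mul fun y y' => ?_
  rw [NNReal.coe_one, one_mul, dist_pi_le_iff dist_nonneg]
  intro j
  induction j using i.succAboveCases with
  | x => simp
  | p k => simpa using dist_le_pi_dist y y' k

theorem hausdorffMeasure_image_lt_top {m : ℕ} {X : Type*} [EMetricSpace X] [MeasurableSpace X]
    [BorelSpace X] {g : (Fin m → ℝ) → X} {K : ℝ≥0} {s : Set (Fin m → ℝ)}
    (hg : LipschitzOnWith K g s) (hs : IsCompact s) : μH[m] (g '' s) < ∞ := by
  refine (hg.hausdorffMeasure_image_le (Nat.cast_nonneg m)).trans_lt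
    (ENNReal.mul_lt_top (ENNReal.rpow_lt_top_of_nonneg (Nat.cast_nonneg m) ENNReal.coe_ne_top) ?_)
  have hvol : (μH[m] : Measure (Fin m → ℝ)) = volume := by
    simpa using hausdorffMeasure_pi_real (ι := Fin m)
  exact hvol ▸ hs.measure_lt_top

noncomputable def cubeFaceChart {m : ℕ} (i : Fin (m + 1)) (a : ℝ) (y : Fin m → ℝ) :
    EuclideanSpace ℝ (Fin (m + 1)) :=
  NormedSpace.normalize (WithLp.toLp 2 (Fin.insertNth (α := fun _ => ℝ) i a y))

theorem exists_lipschitzWith_cubeFaceChart {m : ℕ} (i : Fin (m + 1)) {a : ℝ} (ha : |a| = 1) :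
    ∃ K, LipschitzWith K (cubeFaceChart i a) := by
  have hmaps : Set.MapsTo (fun y => WithLp.toLp 2 (Fin.insertNth (α := fun _ => ℝ) i a y))
      Set.univ {x | 1 ≤ ‖x‖} := fun y _ => by
    simpa [ha] using PiLp.norm_apply_le (WithLp.toLp 2 (Fin.insertNth (α := fun _ => ℝ) i a y)) i
  refine ⟨_, lipschitzOnWith_univ.mp (lipschitzOnWith_normalize.comp
    ((PiLp.lipschitzWith_toLp 2 _).comp (lipschitzWith_insertNth i a)).lipschitzOnWith hmaps)⟩

theorem sphere_subset_biUnion_cubeFaceChart (m : ℕ) :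
    sphere (0 : EuclideanSpace ℝ (Fin (m + 1))) 1 ⊆
      ⋃ p ∈ (Set.univ ×ˢ {-1, 1} : Set (Fin (m + 1) × ℝ)),
        cubeFaceChart p.1 p.2 '' closedBall 0 1 := by
  intro u hu
  rw [mem_sphere_zero_iff_norm] at hu
  obtain ⟨i, -, hi⟩ := Finset.exists_max_image Finset.univ (fun j => |u j|) Finset.univ_nonempty
  have hui : 0 < |u i| := by
    by_contra! h
    have : u = 0 := by
      ext j
      simpa using (hi j (Finset.mem_univ j)).trans h
    simp [this] at hu
  refine Set.mem_biUnion (x := (i, u i / |u i|)) ⟨Set.mem_univ i, ?_⟩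
    ⟨fun k => u (i.succAbove k) / |u i|, ?_, ?_⟩
  · rcases abs_choice (u i) with h | h <;> simp [h, abs_pos.mp hui]
  · rw [mem_closedBall_zero_iff, pi_norm_le_iff_of_nonneg zero_le_one]
    intro k
    rw [Real.norm_eq_abs, abs_div, abs_abs, div_le_one hui]
    exact hi _ (Finset.mem_univ _)
  · have : WithLp.toLp 2 (Fin.insertNth (α := fun _ => ℝ) i (u i / |u i|)
        fun k => u (i.succAbove k) / |u i|) = |u i|⁻¹ • u := by
      ext j
      induction j using i.succAboveCases with
      | x => simp [div_eq_inv_mul]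
      | p k => simp [div_eq_inv_mul]
    rw [cubeFaceChart, this, NormedSpace.normalize_smul_of_pos (inv_pos.mpr hui),
      NormedSpace.normalize_eq_self_of_norm_eq_one hu]

theorem hausdorffMeasure_sphere_lt_top (n : ℕ) :
    μH[(n : ℝ) - 1] (sphere (0 : EuclideanSpace ℝ (Fin n)) 1) < ∞ := by
  cases n with
  | zero =>
    have : sphere (0 : EuclideanSpace ℝ (Fin 0)) 1 = ∅ := by
      ext x
      simp [Subsingleton.elim x 0]
    simp [this]
  | succ m =>
    rw [show ((m + 1 : ℕ) : ℝ) - 1 = m by push_cast; ring]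
    refine (measure_mono (sphere_subset_biUnion_cubeFaceChart m)).trans_lt
      (measure_biUnion_lt_top (Set.finite_univ.prod (Set.toFinite _)) fun p hp => ?_)
    have ha : p.2 = -1 ∨ p.2 = 1 := hp.2
    obtain ⟨K, hK⟩ := exists_lipschitzWith_cubeFaceChart p.1 (a := p.2) (by
      rcases ha with h | h <;> simp [h])
    exact hausdorffMeasure_image_lt_top hK.lipschitzOnWith (isCompact_closedBall 0 1)

theorem sq_integral_norm_le_of_support_subset {α E : Type*} [MeasurableSpace α] {μ : Measure α}
    [NormedAddCommGroup E] {f : α → E} {s : Set α} (hf : MemLp f 2 μ)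
    (hsupp : Function.support f ⊆ s) (hs : μ s < ⊤) :
    (∫ x, ‖f x‖ ∂μ) ^ 2 ≤ μ.real s * ∫ x, ‖f x‖ ^ 2 ∂μ := by
  have := isFiniteMeasure_restrict.mpr hs.ne
  have hvanish : ∀ x ∉ s, ‖f x‖ = 0 := fun x hx =>
    norm_eq_zero.mpr (Function.notMem_support.mp fun h => hx (hsupp h))
  have hholder := integral_mul_norm_le_Lp_mul_Lq (μ := μ.restrict s) HolderConjugate.two_two
    (f := fun x => ‖f x‖) (g := fun _ => (1 : ℝ)) (by simpa using (hf.restrict s).norm)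
    (memLp_const 1)
  simp only [norm_norm, norm_one, mul_one, one_pow, rpow_two, setIntegral_const, smul_eq_mul]
    at hholder
  rw [setIntegral_eq_integral_of_forall_compl_eq_zero hvanish,
    setIntegral_eq_integral_of_forall_compl_eq_zero fun x hx => by simp [hvanish x hx]] at hholder
  calc (∫ x, ‖f x‖ ∂μ) ^ 2
      ≤ ((∫ x, ‖f x‖ ^ 2 ∂μ) ^ (1 / 2 : ℝ) * μ.real s ^ (1 / 2 : ℝ)) ^ 2 := by gcongr
    _ = μ.real s * ∫ x, ‖f x‖ ^ 2 ∂μ := by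
        rw [← sqrt_eq_rpow, ← sqrt_eq_rpow, mul_pow,
          sq_sqrt (integral_nonneg fun x => by positivity), sq_sqrt measureReal_nonneg, mul_comm]

theorem integrable_of_memLp_of_support_subset {α E : Type*} [MeasurableSpace α] {μ : Measure α}
    [NormedAddCommGroup E] {f : α → E} {s : Set α} {p : ℝ≥0∞} (hp : 1 ≤ p) (hf : MemLp f p μ)
    (hsupp : Function.support f ⊆ s) (hs : μ s < ∞) : Integrable f μ := by
  have := isFiniteMeasure_restrict.mpr hs.ne
  exact (integrableOn_iff_integrable_of_support_subset hsupp).mp ((hf.restrict s).integrable hp)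

theorem integrable_conj {α : Type*} [MeasurableSpace α] {μ : Measure α} {g : α → ℂ}
    (hg : Integrable g μ) : Integrable (fun x => starRingEnd ℂ (g x)) μ :=
  Complex.conjCLE.toContinuousLinearMap.integrable_comp hg

theorem support_conj {α : Type*} (g : α → ℂ) :
    Function.support (fun x => starRingEnd ℂ (g x)) = Function.support g := by
  ext x; simp

section Laplace

variable {E : Type*} [NormedAddCommGroup E] [InnerProductSpace ℝ E] {g : E → ℂ} {R : ℝ}

theorem norm_mul_exp_inner_le (hg : Function.support g ⊆ closedBall 0 R) {v : E} {z : ℂ}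
    {a b : ℝ} (hv : ‖v‖ ≤ a) (hz : |z.re| ≤ b) (x : E) :
    ‖g x * Complex.exp (z * ((⟪v, x⟫_ℝ : ℝ) : ℂ))‖ ≤ ‖g x‖ * exp (R * a * b) := by
  by_cases hx : g x = 0
  · simp [hx]
  have hxR : ‖x‖ ≤ R := mem_closedBall_zero_iff.mp (hg hx)
  rw [norm_mul, Complex.norm_exp, Complex.re_mul_ofReal]
  gcongr ‖g x‖ * exp ?_
  calc z.re * ⟪v, x⟫_ℝ ≤ |z.re| * (‖v‖ * ‖x‖) :=
        (le_abs_self _).trans (by rw [abs_mul]; gcongr; exact abs_real_inner_le_norm v x)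
    _ ≤ b * (a * R) := by
        have := (norm_nonneg v).trans hv
        gcongr; exact (abs_nonneg _).trans hz
    _ = R * a * b := by ring

variable [MeasurableSpace E] {μ : Measure E}

noncomputable def laplace (μ : Measure E) (g : E → ℂ) (v : E) (z : ℂ) : ℂ :=
  ∫ x, g x * Complex.exp (z * ((⟪v, x⟫_ℝ : ℝ) : ℂ)) ∂μ

theorem norm_laplace_le (hg_int : Integrable g μ) (hg : Function.support g ⊆ closedBall 0 R)
    {v : E} {z : ℂ} {a b : ℝ} (hv : ‖v‖ ≤ a) (hz : |z.re| ≤ b) :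
    ‖laplace μ g v z‖ ≤ (∫ x, ‖g x‖ ∂μ) * exp (R * a * b) :=
  (norm_integral_le_of_norm_le (hg_int.norm.mul_const _)
    (.of_forall (norm_mul_exp_inner_le hg hv hz))).trans_eq (integral_mul_const _ _)

variable [OpensMeasurableSpace E]

theorem aestronglyMeasurable_mul_exp_inner (hg_int : Integrable g μ) (v : E) (z : ℂ) :
    AEStronglyMeasurable (fun x => g x * Complex.exp (z * ((⟪v, x⟫_ℝ : ℝ) : ℂ))) μ :=
  hg_int.aestronglyMeasurable.mul (by fun_prop : Continuous _).aestronglyMeasurable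

theorem continuous_laplace (hg_int : Integrable g μ) (hg : Function.support g ⊆ closedBall 0 R) :
    Continuous fun p : E × ℂ => laplace μ g p.1 p.2 := by
  refine continuous_iff_continuousAt.mpr fun p₀ => continuousAt_of_dominated
    (bound := fun x => ‖g x‖ * exp (R * (‖p₀‖ + 1) * (‖p₀‖ + 1)))
    (.of_forall fun p => aestronglyMeasurable_mul_exp_inner hg_int p.1 p.2) ?_
    (hg_int.norm.mul_const _) (.of_forall fun x => by fun_prop)
  filter_upwards [closedBall_mem_nhds p₀ one_pos] with p hp
  have hp := norm_le_of_mem_closedBall hp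
  exact .of_forall (norm_mul_exp_inner_le hg (norm_fst_le p |>.trans hp)
    ((Complex.abs_re_le_norm _).trans (norm_snd_le p |>.trans hp)))

theorem differentiable_laplace (hg_int : Integrable g μ)
    (hg : Function.support g ⊆ closedBall 0 R) (v : E) : Differentiable ℂ (laplace μ g v) :=
  differentiable_integral_of_locally_dominated (aestronglyMeasurable_mul_exp_inner hg_int v)
    (.of_forall fun x => by fun_prop) fun r =>
      ⟨fun x => ‖g x‖ * exp (R * ‖v‖ * r), hg_int.norm.mul_const _,
        .of_forall fun x z hz => norm_mul_exp_inner_le hg le_rfl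
          ((Complex.abs_re_le_norm z).trans hz) x⟩

end Laplace

section PolarIntegrand

variable {E : Type*} [NormedAddCommGroup E] [InnerProductSpace ℝ E] [MeasurableSpace E]
  {μ : Measure E} {f : E → ℂ} {R : ℝ} {n : ℕ}

noncomputable def polarIntegrand (μ : Measure E) (n : ℕ) (f : E → ℂ) (s : ℂ) (ω : E) (t : ℝ) :
    ℂ :=
  s ^ n * (t : ℂ) ^ (n - 1) * laplace μ f ω (-Complex.I * s * t) *
    laplace μ (fun x => starRingEnd ℂ (f x)) ω (Complex.I * s * t)

theorem norm_polarIntegrand_le (hf_int : Integrable f μ)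
    (hf : Function.support f ⊆ closedBall 0 R) {s : ℂ} {ω : E} {t b : ℝ} (hω : ‖ω‖ ≤ 1)
    (ht : |t| ≤ 1) (hs : |s.im| ≤ b) :
    ‖polarIntegrand μ n f s ω t‖ ≤ ‖s‖ ^ n * ((∫ x, ‖f x‖ ∂μ) * exp (R * b)) ^ 2 := by
  have hst : |s.im| * |t| ≤ b := (mul_le_of_le_one_right (abs_nonneg _) ht).trans hs
  have ht' : ‖(t : ℂ) ^ (n - 1)‖ ≤ 1 := by
    rw [norm_pow, Complex.norm_real]; exact pow_le_one₀ (norm_nonneg t) ht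
  have h₁ := norm_laplace_le hf_int hf hω (z := -Complex.I * s * t) (by simpa [abs_mul] using hst)
  have h₂ := norm_laplace_le (integrable_conj hf_int) ((support_conj f).trans_subset hf) hω
    (z := Complex.I * s * t) (by simpa [abs_mul] using hst)
  simp only [Complex.norm_conj, mul_one] at h₁ h₂
  calc ‖polarIntegrand μ n f s ω t‖
      = ‖s‖ ^ n * ‖(t : ℂ) ^ (n - 1)‖ * ‖laplace μ f ω (-Complex.I * s * t)‖ *
          ‖laplace μ (fun x => starRingEnd ℂ (f x)) ω (Complex.I * s * t)‖ := by
        simp only [polarIntegrand, norm_mul, norm_pow]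
    _ ≤ ‖s‖ ^ n * 1 * ((∫ x, ‖f x‖ ∂μ) * exp (R * b)) *
          ((∫ x, ‖f x‖ ∂μ) * exp (R * b)) := by gcongr
    _ = _ := by ring

theorem norm_integral_polarIntegrand_le (hf_int : Integrable f μ)
    (hf : Function.support f ⊆ closedBall 0 R) {s : ℂ} {ω : E} {b : ℝ} (hω : ‖ω‖ ≤ 1)
    (hs : |s.im| ≤ b) :
    ‖∫ t in Set.Ioo (0 : ℝ) 1, polarIntegrand μ n f s ω t‖ ≤
      ‖s‖ ^ n * ((∫ x, ‖f x‖ ∂μ) * exp (R * b)) ^ 2 := by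
  simpa using norm_setIntegral_le_of_norm_le_const (μ := volume) (s := Set.Ioo (0 : ℝ) 1)
    measure_Ioo_lt_top fun t ht =>
      norm_polarIntegrand_le (n := n) hf_int hf hω ((abs_of_pos ht.1).le.trans ht.2.le) hs

variable {ν : Measure E} [IsFiniteMeasure ν]

theorem norm_integral_integral_polarIntegrand_le (hf_int : Integrable f μ)
    (hf : Function.support f ⊆ closedBall 0 R) (hν : ∀ᵐ ω ∂ν, ‖ω‖ ≤ 1) (s : ℂ) :
    ‖∫ ω, (∫ t in Set.Ioo (0 : ℝ) 1, polarIntegrand μ n f s ω t) ∂ν‖ ≤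
      ν.real Set.univ * (‖s‖ ^ n * ((∫ x, ‖f x‖ ∂μ) * exp (R * |s.im|)) ^ 2) := by
  rw [mul_comm]
  exact norm_integral_le_of_norm_le_const
    (hν.mono fun ω hω => norm_integral_polarIntegrand_le hf_int hf hω le_rfl)

variable [OpensMeasurableSpace E]

theorem continuous_polarIntegrand (hf_int : Integrable f μ)
    (hf : Function.support f ⊆ closedBall 0 R) (s : ℂ) :
    Continuous fun p : E × ℝ => polarIntegrand μ n f s p.1 p.2 := by
  have h₁ := continuous_laplace hf_int hf
  have h₂ := continuous_laplace (integrable_conj hf_int) ((support_conj f).trans_subset hf)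
  unfold polarIntegrand
  fun_prop

theorem differentiable_polarIntegrand (hf_int : Integrable f μ)
    (hf : Function.support f ⊆ closedBall 0 R) (ω : E) (t : ℝ) :
    Differentiable ℂ fun s => polarIntegrand μ n f s ω t := by
  have h₁ := differentiable_laplace hf_int hf ω
  have h₂ := differentiable_laplace (integrable_conj hf_int) ((support_conj f).trans_subset hf) ω
  unfold polarIntegrand
  fun_prop

theorem differentiable_integral_polarIntegrand (hf_int : Integrable f μ)
    (hf : Function.support f ⊆ closedBall 0 R) {ω : E} (hω : ‖ω‖ ≤ 1) :
    Differentiable ℂ fun s => ∫ t in Set.Ioo (0 : ℝ) 1, polarIntegrand μ n f s ω t :=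
  differentiable_integral_of_locally_dominated
    (fun s => ((continuous_polarIntegrand hf_int hf s).comp
      (Continuous.prodMk_right ω)).aestronglyMeasurable)
    (.of_forall (differentiable_polarIntegrand hf_int hf ω)) fun r =>
      ⟨fun _ => r ^ n * ((∫ x, ‖f x‖ ∂μ) * exp (R * r)) ^ 2, integrable_const _,
        (ae_restrict_mem measurableSet_Ioo).mono fun _ ht s hs =>
          (norm_polarIntegrand_le hf_int hf hω ((abs_of_pos ht.1).le.trans ht.2.le)
            ((Complex.abs_im_le_norm s).trans hs)).trans
            (mul_le_mul_of_nonneg_right (pow_le_pow_left₀ (norm_nonneg s) hs n) (sq_nonneg _))⟩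

theorem differentiable_integral_integral_polarIntegrand (hf_int : Integrable f μ)
    (hf : Function.support f ⊆ closedBall 0 R) (hν : ∀ᵐ ω ∂ν, ‖ω‖ ≤ 1) :
    Differentiable ℂ fun s => ∫ ω, (∫ t in Set.Ioo (0 : ℝ) 1, polarIntegrand μ n f s ω t) ∂ν :=
  differentiable_integral_of_locally_dominated
    (fun s => (continuous_polarIntegrand hf_int hf s).stronglyMeasurable.integral_prod_right'
      |>.aestronglyMeasurable)
    (hν.mono fun _ hω => differentiable_integral_polarIntegrand hf_int hf hω) fun r =>
      ⟨fun _ => r ^ n * ((∫ x, ‖f x‖ ∂μ) * exp (R * r)) ^ 2, integrable_const _,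
        hν.mono fun _ hω s hs =>
          (norm_integral_polarIntegrand_le hf_int hf hω
            ((Complex.abs_im_le_norm s).trans hs)).trans
            (mul_le_mul_of_nonneg_right (pow_le_pow_left₀ (norm_nonneg s) hs n) (sq_nonneg _))⟩

end PolarIntegrand

theorem stmt2_general (n : ℕ) (R : ℝ) :
    ∃ C > 0, ∀ (f : EuclideanSpace ℝ (Fin n) → ℂ) (M : ℝ),
      MemLp f 2 volume →
      Function.support f ⊆ Metric.ball 0 R →
      0 ≤ M → (∫ x, ‖f x‖ ^ 2) ≤ M ^ 2 →
      Differentiable ℂ (I1 f) ∧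
        ∀ s : ℂ, ‖I1 f s‖ ≤ C * ‖s‖ ^ n * Real.exp (2 * R * |s.im|) * M ^ 2 := by
  set σ : Measure (EuclideanSpace ℝ (Fin n)) := μH[(n : ℝ) - 1].restrict (sphere 0 1)
  have : IsFiniteMeasure σ := isFiniteMeasure_restrict.mpr (hausdorffMeasure_sphere_lt_top n).ne
  have hσ : ∀ᵐ ω ∂σ, ‖ω‖ ≤ 1 := (ae_restrict_mem isClosed_sphere.measurableSet).mono
    fun ω hω => (mem_sphere_zero_iff_norm.mp hω).le
  set V := volume.real (ball (0 : EuclideanSpace ℝ (Fin n)) R)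
  refine ⟨σ.real Set.univ * V + 1, by positivity, fun f M hf2 hsupp _ hM => ?_⟩
  have hf_int := integrable_of_memLp_of_support_subset one_le_two hf2 hsupp measure_ball_lt_top
  have hf := hsupp.trans ball_subset_closedBall
  have hL : (∫ x, ‖f x‖) ^ 2 ≤ V * M ^ 2 :=
    (sq_integral_norm_le_of_support_subset hf2 hsupp measure_ball_lt_top).trans
      (mul_le_mul_of_nonneg_left hM measureReal_nonneg)
  have hI1 : I1 f = fun s => ∫ ω, (∫ t in Set.Ioo (0 : ℝ) 1, polarIntegrand volume n f s ω t) ∂σ :=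
    rfl
  rw [hI1]
  refine ⟨differentiable_integral_integral_polarIntegrand hf_int hf hσ, fun s => ?_⟩
  calc _ ≤ σ.real Set.univ * (‖s‖ ^ n * ((∫ x, ‖f x‖) * exp (R * |s.im|)) ^ 2) :=
        norm_integral_integral_polarIntegrand_le hf_int hf hσ s
    _ = σ.real Set.univ * (∫ x, ‖f x‖) ^ 2 * (‖s‖ ^ n * exp (2 * R * |s.im|)) := by
        rw [mul_pow, ← exp_nat_mul]; push_cast; ring_nf
    _ ≤ (σ.real Set.univ * V + 1) * M ^ 2 * (‖s‖ ^ n * exp (2 * R * |s.im|)) := by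
        gcongr ?_ * _
        nlinarith [mul_le_mul_of_nonneg_left hL (measureReal_nonneg (μ := σ) (s := Set.univ)),
          sq_nonneg M]
    _ = _ := by ring

theorem stmt2 (n : ℕ) (R : ℝ) (hR : 0 < R) :
    ∃ C > 0, ∀ (f : EuclideanSpace ℝ (Fin n) → ℂ) (M : ℝ),
      MemLp f 2 volume →
      Function.support f ⊆ Metric.ball 0 R →
      0 ≤ M → (∫ x, ‖f x‖ ^ 2) ≤ M ^ 2 →
      Differentiable ℂ (I1 f) ∧
        ∀ s : ℂ, ‖I1 f s‖ ≤ C * ‖s‖ ^ n * Real.exp (2 * R * |s.im|) * M ^ 2 :=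
  stmt2_general n R
end
end

section
/- Let ε ∈ (0, e^{-1}), K > 1, R > 0, and assume 2^{1/4}((2R+3)π)^{1/3} K^{1/3} < |ln ε|^{1/4}. Set s₀ = ((2R+3)π)^{-1/3} K^{2/3} |ln ε|^{1/4}. Then s₀ > 2^{1/4} K, and moreover (2R+3)s₀ - (2|ln ε|/π)(K/s₀)² = -2((2R+3)²/π)^{1/3} K^{2/3} |ln ε|^{1/2} (1 - (1/2)|ln ε|^{-1/4}), which is at most -K^{2/3}|ln ε|^{1/2}. -/
open Real

/-!
With `x = a^{1/3}`, `y = c^{1/3}`, `k = K^{1/3}`, `l = L^{1/4}` every fractional power becomes a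
monomial: the cutoff is `s = k² l / (x y)`, and the balance `a s - (2L/c)(K/s)²` is the rational
function `x² k² l / y - 2 x² k² l² / y`. Multiplying the case hypothesis by
`K^{2/3} / ((2R+3)π)^{1/3}` gives `s₀ > 2^{1/4} K`. The final estimate needs only
`((2R+3)²/π)^{1/3} ≥ 1` and `1 - ½ |ln ε|^{-1/4} ≥ ½`; the latter holds because the case
hypothesis already forces `|ln ε| > 1`.
-/

lemma rpow_eq_rpow_pow {a p q : ℝ} (ha : 0 ≤ a) (n : ℕ) (h : q * n = p) :
    a ^ p = (a ^ q) ^ n := by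
  rw [← h, rpow_mul_natCast ha]

lemma self_eq_rpow_pow {a q : ℝ} (ha : 0 ≤ a) (n : ℕ) (h : q * n = 1) : a = (a ^ q) ^ n := by
  rw [← rpow_eq_rpow_pow ha n h, rpow_one]

lemma cutoff_balance_monomial (x y k l : ℝ) (hx : x ≠ 0) (hy : y ≠ 0) (hk : k ≠ 0)
    (hl : l ≠ 0) :
    x ^ 3 * (k ^ 2 * l / (x * y)) - 2 * l ^ 4 / y ^ 3 * (k ^ 3 / (k ^ 2 * l / (x * y))) ^ 2
      = -2 * (x ^ 2 / y) * k ^ 2 * l ^ 2 * (1 - 1 / 2 * l⁻¹) := by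
  field_simp
  ring

theorem cutoff_balance {a c K L s : ℝ} (ha : 0 < a) (hc : 0 < c) (hK : 0 < K) (hL : 0 < L)
    (hs : s = (a * c) ^ (-(1 : ℝ) / 3) * K ^ ((2 : ℝ) / 3) * L ^ ((1 : ℝ) / 4)) :
    a * s - (2 * L / c) * (K / s) ^ 2 =
      -2 * (a ^ 2 / c) ^ ((1 : ℝ) / 3) * K ^ ((2 : ℝ) / 3)
        * L ^ ((1 : ℝ) / 2) * (1 - (1 / 2) * L ^ (-(1 : ℝ) / 4)) := by
  set x := a ^ ((1 : ℝ) / 3)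
  set y := c ^ ((1 : ℝ) / 3)
  set k := K ^ ((1 : ℝ) / 3)
  set l := L ^ ((1 : ℝ) / 4)
  have hK23 : K ^ ((2 : ℝ) / 3) = k ^ 2 := rpow_eq_rpow_pow hK.le 2 (by norm_num)
  have hL12 : L ^ ((1 : ℝ) / 2) = l ^ 2 := rpow_eq_rpow_pow hL.le 2 (by norm_num)
  have hLm14 : L ^ (-(1 : ℝ) / 4) = l⁻¹ := by rw [neg_div, rpow_neg hL.le]
  have hs' : s = k ^ 2 * l / (x * y) := by
    rw [hs, hK23, neg_div, rpow_neg (by positivity), mul_rpow ha.le hc.le]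
    ring
  have hC : (a ^ 2 / c) ^ ((1 : ℝ) / 3) = x ^ 2 / y := by
    rw [div_rpow (by positivity) hc.le, ← rpow_natCast, ← rpow_mul ha.le, mul_comm,
      rpow_mul ha.le, rpow_natCast]
  have ha3 : a = x ^ 3 := self_eq_rpow_pow ha.le 3 (by norm_num)
  have hc3 : c = y ^ 3 := self_eq_rpow_pow hc.le 3 (by norm_num)
  have hK3 : K = k ^ 3 := self_eq_rpow_pow hK.le 3 (by norm_num)
  have hL4 : L = l ^ 4 := self_eq_rpow_pow hL.le 4 (by norm_num)
  rw [hs', hC, hK23, hL12, hLm14, ha3, hc3, hK3, hL4]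
  exact cutoff_balance_monomial x y k l (by positivity) (by positivity) (by positivity)
    (by positivity)

theorem lt_cutoff {t A K L s : ℝ} (hA : 0 < A) (hK : 0 < K)
    (hs : s = A ^ (-(1 : ℝ) / 3) * K ^ ((2 : ℝ) / 3) * L ^ ((1 : ℝ) / 4))
    (h : t * A ^ ((1 : ℝ) / 3) * K ^ ((1 : ℝ) / 3) < L ^ ((1 : ℝ) / 4)) : t * K < s := by
  set x := A ^ ((1 : ℝ) / 3)
  set k := K ^ ((1 : ℝ) / 3)
  have hx : 0 < x := by positivity
  have hK3 : K = k ^ 3 := self_eq_rpow_pow hK.le 3 (by norm_num)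
  have hK23 : K ^ ((2 : ℝ) / 3) = k ^ 2 := rpow_eq_rpow_pow hK.le 2 (by norm_num)
  calc t * K = x⁻¹ * k ^ 2 * (t * x * k) := by
        rw [hK3]
        field_simp
    _ < x⁻¹ * k ^ 2 * L ^ ((1 : ℝ) / 4) := by gcongr
    _ = s := by rw [hs, hK23, neg_div, rpow_neg hA.le]

lemma neg_two_mul_le_neg {C B M N : ℝ} (hC : 1 ≤ C) (hB : 1 / 2 ≤ B) (hM : 0 ≤ M)
    (hN : 0 ≤ N) :
    -2 * C * M * N * B ≤ -(M * N) := by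
  have : 1 ≤ 2 * C * B := by nlinarith
  nlinarith [mul_nonneg hM hN]

theorem stmt7_general (ε K R s₀ : ℝ)
    (hK : 1 < K) (hR : 0 < R)
    (hcase : (2 : ℝ) ^ ((1 : ℝ) / 4) * ((2 * R + 3) * π) ^ ((1 : ℝ) / 3) * K ^ ((1 : ℝ) / 3)
        < |Real.log ε| ^ ((1 : ℝ) / 4))
    (hs₀ : s₀ = ((2 * R + 3) * π) ^ (-(1 : ℝ) / 3) * K ^ ((2 : ℝ) / 3)
        * |Real.log ε| ^ ((1 : ℝ) / 4)) :
    (2 : ℝ) ^ ((1 : ℝ) / 4) * K < s₀ ∧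
    (2 * R + 3) * s₀ - (2 * |Real.log ε| / π) * (K / s₀) ^ 2 =
      -2 * ((2 * R + 3) ^ 2 / π) ^ ((1 : ℝ) / 3) * K ^ ((2 : ℝ) / 3)
        * |Real.log ε| ^ ((1 : ℝ) / 2) * (1 - (1 / 2) * |Real.log ε| ^ (-(1 : ℝ) / 4)) ∧
    (2 * R + 3) * s₀ - (2 * |Real.log ε| / π) * (K / s₀) ^ 2 ≤
      -(K ^ ((2 : ℝ) / 3) * |Real.log ε| ^ ((1 : ℝ) / 2)) := by
  have h3 : 3 ≤ 2 * R + 3 := by linarith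
  have hlog : 1 < |Real.log ε| := by
    have hone :
        1 ≤ (2 : ℝ) ^ ((1 : ℝ) / 4) * ((2 * R + 3) * π) ^ ((1 : ℝ) / 3) * K ^ ((1 : ℝ) / 3) :=
      one_le_mul_of_one_le_of_one_le
        (one_le_mul_of_one_le_of_one_le (one_le_rpow (by norm_num) (by norm_num))
          (one_le_rpow (by nlinarith [pi_gt_three]) (by norm_num)))
        (one_le_rpow hK.le (by norm_num))
    by_contra! h
    linarith [rpow_le_one (abs_nonneg _) h (by norm_num : (0 : ℝ) ≤ 1 / 4)]
  have hbalance := cutoff_balance (by linarith) pi_pos (by linarith) (by linarith) hs₀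
  refine ⟨lt_cutoff (by positivity) (by linarith) hs₀ hcase, hbalance, hbalance ▸ ?_⟩
  refine neg_two_mul_le_neg (one_le_rpow ?_ (by norm_num)) ?_ (by positivity) (by positivity)
  · rw [le_div_iff₀ pi_pos]
    nlinarith [pi_lt_four]
  · linarith [rpow_le_one_of_one_le_of_nonpos hlog.le (by norm_num : -(1 : ℝ) / 4 ≤ 0)]

theorem stmt7 (ε K R s₀ : ℝ)
    (hε : 0 < ε) (hε' : ε < Real.exp (-1))
    (hK : 1 < K) (hR : 0 < R)
    (hcase : (2 : ℝ) ^ ((1 : ℝ) / 4) * ((2 * R + 3) * π) ^ ((1 : ℝ) / 3) * K ^ ((1 : ℝ) / 3)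
        < |Real.log ε| ^ ((1 : ℝ) / 4))
    (hs₀ : s₀ = ((2 * R + 3) * π) ^ (-(1 : ℝ) / 3) * K ^ ((2 : ℝ) / 3)
        * |Real.log ε| ^ ((1 : ℝ) / 4)) :
    (2 : ℝ) ^ ((1 : ℝ) / 4) * K < s₀ ∧
    (2 * R + 3) * s₀ - (2 * |Real.log ε| / π) * (K / s₀) ^ 2 =
      -2 * ((2 * R + 3) ^ 2 / π) ^ ((1 : ℝ) / 3) * K ^ ((2 : ℝ) / 3)
        * |Real.log ε| ^ ((1 : ℝ) / 2) * (1 - (1 / 2) * |Real.log ε| ^ (-(1 : ℝ) / 4)) ∧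
    (2 * R + 3) * s₀ - (2 * |Real.log ε| / π) * (K / s₀) ^ 2 ≤
      -(K ^ ((2 : ℝ) / 3) * |Real.log ε| ^ ((1 : ℝ) / 2)) :=
  stmt7_general ε K R s₀ hK hR hcase hs₀
end
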